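/- arXiv:1904.12158 — 2 statements merged into one kernel-verified Lean document; each statement's English description precedes it below -/
import Mathlib

section
/- Intermediate-frequency contraction for Taylor transmission conditions without overlap (Theorem 3.3, middle case): for every Fourier frequency k with ω/Cp < k < ω/Cs (so λ₁ = i√(ω²/Cs² − k²) is purely imaginary with positive imaginary part and λ₂ = √(k² − ω²/Cp²) > 0 is real), both roots of the quadratic Q₀(z) = z² − (X₀² + 2Y₀)z + Y₀² have modulus strictly less than 1; hence the non-overlapping Schwarz method with zeroth-order Taylor transmission conditions converges on these frequencies. -/
noncomputable section

open Complex

/-- `λ₁ = √(k² − ω²/Cs²)`, principal branch of the complex square root. -/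
def lam1 (ω Cs k : ℝ) : ℂ := ((k ^ 2 - ω ^ 2 / Cs ^ 2 : ℝ) : ℂ) ^ ((1 : ℂ) / 2)

/-- `λ₂ = √(k² − ω²/Cp²)`, principal branch of the complex square root. -/
def lam2 (ω Cp k : ℝ) : ℂ := ((k ^ 2 - ω ^ 2 / Cp ^ 2 : ℝ) : ℂ) ^ ((1 : ℂ) / 2)

/-- `Z₁ = Cs³(k² + λ₁²)² + ω²Cp·k²`. -/
def Z1 (ω Cs Cp k : ℝ) : ℂ :=
  (Cs : ℂ) ^ 3 * ((k : ℂ) ^ 2 + (lam1 ω Cs k) ^ 2) ^ 2 + (ω : ℂ) ^ 2 * (Cp : ℂ) * (k : ℂ) ^ 2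

/-- `Z₂ = (4Cs³k² + Cpω²)λ₁λ₂`. -/
def Z2 (ω Cs Cp k : ℝ) : ℂ :=
  (4 * (Cs : ℂ) ^ 3 * (k : ℂ) ^ 2 + (Cp : ℂ) * (ω : ℂ) ^ 2) * lam1 ω Cs k * lam2 ω Cp k

/-- `K = 2k(Cpω² + 2Cs³(k² + λ₁²))`. -/
def Kq (ω Cs Cp k : ℝ) : ℂ :=
  2 * (k : ℂ) * ((Cp : ℂ) * (ω : ℂ) ^ 2 + 2 * (Cs : ℂ) ^ 3 * ((k : ℂ) ^ 2 + (lam1 ω Cs k) ^ 2))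

/-- `D = −Z₁ + Z₂ + iω³(λ₁ + λ₂Cp/Cs)`. -/
def Dq (ω Cs Cp k : ℝ) : ℂ :=
  -Z1 ω Cs Cp k + Z2 ω Cs Cp k +
    Complex.I * (ω : ℂ) ^ 3 * (lam1 ω Cs k + lam2 ω Cp k * (Cp : ℂ) / (Cs : ℂ))

/-- `b₁₁ = (−Z₁ − Z₂ − iω³(λ₁ − λ₂Cp/Cs))/D`. -/
def b11 (ω Cs Cp k : ℝ) : ℂ :=
  (-Z1 ω Cs Cp k - Z2 ω Cs Cp k -
    Complex.I * (ω : ℂ) ^ 3 * (lam1 ω Cs k - lam2 ω Cp k * (Cp : ℂ) / (Cs : ℂ))) / Dq ω Cs Cp k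

/-- `b₁₂ = iλ₂K/D`. -/
def b12 (ω Cs Cp k : ℝ) : ℂ :=
  Complex.I * lam2 ω Cp k * Kq ω Cs Cp k / Dq ω Cs Cp k

/-- `b₂₁ = −iλ₁K/D`. -/
def b21 (ω Cs Cp k : ℝ) : ℂ :=
  -Complex.I * lam1 ω Cs k * Kq ω Cs Cp k / Dq ω Cs Cp k

/-- `b₂₂ = (−Z₁ − Z₂ + iω³(λ₁ − λ₂Cp/Cs))/D`. -/
def b22 (ω Cs Cp k : ℝ) : ℂ :=
  (-Z1 ω Cs Cp k - Z2 ω Cs Cp k +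
    Complex.I * (ω : ℂ) ^ 3 * (lam1 ω Cs k - lam2 ω Cp k * (Cp : ℂ) / (Cs : ℂ))) / Dq ω Cs Cp k

/-- `X_δ = e^{−λ₁δ}b₁₁ − e^{−λ₂δ}b₂₂`. -/
def Xd (ω Cs Cp k δ : ℝ) : ℂ :=
  Complex.exp (-(lam1 ω Cs k) * (δ : ℂ)) * b11 ω Cs Cp k -
    Complex.exp (-(lam2 ω Cp k) * (δ : ℂ)) * b22 ω Cs Cp k

/-- `Y_δ = e^{−(λ₁+λ₂)δ}(b₁₁b₂₂ − b₁₂b₂₁)`. -/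
def Yd (ω Cs Cp k δ : ℝ) : ℂ :=
  Complex.exp (-(lam1 ω Cs k + lam2 ω Cp k) * (δ : ℂ)) *
    (b11 ω Cs Cp k * b22 ω Cs Cp k - b12 ω Cs Cp k * b21 ω Cs Cp k)

/-- The quadratic `Q_δ(z) = z² − (X_δ² + 2Y_δ)z + Y_δ²` whose roots are the eigenvalues `r±`
of the double-iteration operator of the Schwarz method with zeroth-order Taylor
transmission conditions. -/
def Qd (ω Cs Cp k δ : ℝ) (z : ℂ) : ℂ :=
  z ^ 2 - ((Xd ω Cs Cp k δ) ^ 2 + 2 * Yd ω Cs Cp k δ) * z + (Yd ω Cs Cp k δ) ^ 2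

/-! For `ω/Cp < k < ω/Cs` we have `λ₁ = i a` and `λ₂ = b` with `a, b > 0`, so everything is
explicit in the positive reals `Z = Z₁`, `S = Z₂/i`, `A = −iω³λ₁`, `C = ω³λ₂Cp/Cs`:
`D = −(Z + A) + i(S + C)`, `X₀D = 2A + 2iC` and `Y₀D = −(Z − A) + i(S − C)`.
Since `Q₀(z) = (z − Y₀)² − X₀²z`, every root is `z = s²` with `s² − X₀s − Y₀ = 0`, and the Cayley
transform `t = (s − 1)/(s + 1)` turns this equation into `Ct² + (S + iZ)t + iA = 0`. Splitting
that into real and imaginary parts shows it has no root with `Re t ≥ 0` as soon as `AC < ZS`, and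
this inequality holds because `ab·K² = 4(ZS − AC)` with `K > 0`. Hence `|s| < 1`. -/

lemma exists_sq_eq_of_quadratic_eq_zero {K : Type*} [Field K] [IsAlgClosed K] {X Y z : K}
    (hz : z ^ 2 - (X ^ 2 + 2 * Y) * z + Y ^ 2 = 0) :
    ∃ s, s ^ 2 = z ∧ s ^ 2 - X * s - Y = 0 := by
  obtain ⟨s, rfl⟩ := IsAlgClosed.exists_pow_nat_eq z two_pos
  have hfactor : (s ^ 2 - X * s - Y) * ((-s) ^ 2 - X * (-s) - Y) = 0 := by
    linear_combination hz
  rcases mul_eq_zero.mp hfactor with h | h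
  · exact ⟨s, rfl, h⟩
  · exact ⟨-s, neg_sq s, h⟩

lemma re_neg_of_quadratic_eq_zero {A C Z S : ℝ} (hA : 0 < A) (hC : 0 ≤ C) (hZ : 0 ≤ Z)
    (hS : 0 < S) (hAC : A * C < Z * S) {t : ℂ}
    (ht : C * t ^ 2 + (S + Z * I) * t + A * I = 0) : t.re < 0 := by
  by_contra! hx
  obtain ⟨x, y⟩ := t
  simp only at hx
  have hre : C * x ^ 2 + S * x = y * (C * y + Z) := by
    have := congrArg re ht
    simp only [pow_two, add_re, mul_re, ofReal_re, ofReal_im, mul_im, zero_mul, sub_zero, I_re,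
      mul_zero, I_im, mul_one, sub_self, add_zero, add_im, zero_add, zero_re] at this
    linarith
  have him : y * (2 * C * x + S) = -(Z * x + A) := by
    have := congrArg im ht
    simp only [pow_two, add_im, mul_im, ofReal_re, ofReal_im, mul_re, zero_mul, add_zero, add_re,
      I_re, mul_zero, I_im, mul_one, sub_self, zero_add, zero_im] at this
    linarith
  have hden : 0 < 2 * C * x + S := by positivity
  have hy : y < 0 := by
    by_contra! hy
    nlinarith [mul_nonneg hy hden.le]
  have hCyZ : C * y + Z ≤ 0 := by
    by_contra! h
    nlinarith [mul_neg_of_neg_of_pos hy h, mul_nonneg hC (sq_nonneg x)]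
  nlinarith [mul_nonpos_of_nonpos_of_nonneg hCyZ hden.le, mul_nonneg (mul_nonneg hC hZ) hx]

lemma re_sub_one_div_add_one (s : ℂ) :
    ((s - 1) / (s + 1)).re = (normSq s - 1) / normSq (s + 1) := by
  rw [div_re, normSq_apply, normSq_apply]
  simp only [sub_re, add_re, sub_im, add_im, one_re, one_im]
  ring

lemma norm_lt_one_of_quadratic_eq_zero {A C Z S : ℝ} (hA : 0 < A) (hC : 0 < C) (hZ : 0 ≤ Z)
    (hS : 0 < S) (hAC : A * C < Z * S) {s : ℂ}
    (hs : (-(Z + A) + (S + C) * I) * s ^ 2 - (2 * A + 2 * C * I) * s -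
      (-(Z - A) + (S - C) * I) = 0) :
    ‖s‖ < 1 := by
  have hs1 : s + 1 ≠ 0 := by
    intro h
    have h4C : ((4 * C : ℝ) : ℂ) * I = 0 := by
      rw [eq_neg_of_add_eq_zero_left h] at hs
      push_cast
      linear_combination hs
    simp [hC.ne'] at h4C
  set t := (s - 1) / (s + 1) with ht
  have hts : t * (s + 1) = s - 1 := div_mul_cancel₀ _ hs1
  have hroot : C * t ^ 2 + (S + Z * I) * t + A * I = 0 := by
    have : (s + 1) ^ 2 * (C * t ^ 2 + (S + Z * I) * t + A * I) = 0 := by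
      linear_combination (-I) * hs +
        (C * (t * (s + 1) + (s - 1)) + (S + Z * I) * (s + 1)) * hts +
        (C * (s - 1) ^ 2 + S * (s ^ 2 - 1)) * I_sq
    exact (mul_eq_zero.mp this).resolve_left (pow_ne_zero 2 hs1)
  have hre := re_neg_of_quadratic_eq_zero hA hC.le hZ hS hAC hroot
  rw [ht, re_sub_one_div_add_one, div_lt_iff₀ (normSq_pos.mpr hs1), zero_mul, sub_neg,
    ← Complex.sq_norm] at hre
  exact (sq_lt_one_iff₀ (norm_nonneg s)).mp hre

lemma cpow_half_of_nonneg {x : ℝ} (hx : 0 ≤ x) : (x : ℂ) ^ ((1 : ℂ) / 2) = (√x : ℂ) := by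
  rw [show (1 : ℂ) / 2 = ((1 / 2 : ℝ) : ℂ) by norm_num, ← ofReal_cpow hx, Real.sqrt_eq_rpow]

lemma cpow_half_of_neg {x : ℝ} (hx : x < 0) : (x : ℂ) ^ ((1 : ℂ) / 2) = I * (√(-x) : ℂ) := by
  rw [ofReal_cpow_of_nonpos hx.le, ← ofReal_neg, cpow_half_of_nonneg (neg_nonneg.mpr hx.le),
    show (Real.pi : ℂ) * I * (1 / 2) = ((Real.pi / 2 : ℝ) : ℂ) * I by push_cast; ring, exp_mul_I]
  simp [mul_comm]

lemma exists_lam_eq_of_intermediate {ω Cs Cp k : ℝ} (hω : 0 < ω) (hCs : 0 < Cs) (hCp : 0 < Cp)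
    (hk1 : ω / Cp < k) (hk2 : k < ω / Cs) :
    ∃ a b : ℝ, 0 < a ∧ 0 < b ∧ Cs ^ 2 * (a ^ 2 + k ^ 2) = ω ^ 2 ∧
      Cp ^ 2 * (k ^ 2 - b ^ 2) = ω ^ 2 ∧ lam1 ω Cs k = I * a ∧ lam2 ω Cp k = b := by
  have hk : 0 < k := (div_pos hω hCp).trans hk1
  have ha2 : 0 < ω ^ 2 / Cs ^ 2 - k ^ 2 := by
    rw [sub_pos, ← div_pow]; exact pow_lt_pow_left₀ hk2 hk.le two_ne_zero
  have hb2 : 0 < k ^ 2 - ω ^ 2 / Cp ^ 2 := by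
    rw [sub_pos, ← div_pow]; exact pow_lt_pow_left₀ hk1 (by positivity) two_ne_zero
  refine ⟨_, _, Real.sqrt_pos.mpr ha2, Real.sqrt_pos.mpr hb2, ?_, ?_, ?_, ?_⟩
  · rw [Real.sq_sqrt ha2.le]; field_simp; ring
  · rw [Real.sq_sqrt hb2.le]; field_simp; ring
  · rw [lam1, cpow_half_of_neg (by linarith), neg_sub]
  · rw [lam2, cpow_half_of_nonneg hb2.le]

section RealData

variable (ω Cs Cp k a b : ℝ)

/- When `λ₁ = i a` and `λ₂ = b`: `Z₁ = realZ1`, `Z₂ = i·realZ2`, `iω³λ₁ = −realA`,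
`iω³λ₂Cp/Cs = i·realC` and `K = realK`. -/

def realZ1 : ℝ := Cs ^ 3 * (k ^ 2 - a ^ 2) ^ 2 + ω ^ 2 * Cp * k ^ 2

def realZ2 : ℝ := (4 * Cs ^ 3 * k ^ 2 + Cp * ω ^ 2) * (a * b)

def realA : ℝ := ω ^ 3 * a

def realC : ℝ := ω ^ 3 * b * Cp / Cs

def realK : ℝ := 2 * k * (Cp * ω ^ 2 + 2 * Cs ^ 3 * (k ^ 2 - a ^ 2))

variable {ω Cs Cp k a b}

lemma realK_sq_identity (hCs : Cs ≠ 0) (hrel : Cs ^ 2 * (a ^ 2 + k ^ 2) = ω ^ 2) :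
    a * b * realK ω Cs Cp k a ^ 2 =
      4 * (realZ1 ω Cs Cp k a * realZ2 ω Cs Cp k a b - realA ω a * realC ω Cs Cp b) := by
  unfold realK realZ1 realZ2 realA realC
  field_simp
  linear_combination (-4 * Cp * ω ^ 2 * a * b * (Cs ^ 2 * (k ^ 2 + a ^ 2) + ω ^ 2)) * hrel

lemma realK_pos (hω : 0 < ω) (hCs : 0 < Cs) (hCp : 0 < Cp) (hk : 0 < k)
    (hrelA : Cs ^ 2 * (a ^ 2 + k ^ 2) = ω ^ 2) (hrelB : Cp ^ 2 * (k ^ 2 - b ^ 2) = ω ^ 2) :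
    0 < realK ω Cs Cp k a := by
  have hcubic : 0 < Cp ^ 3 + 4 * Cs ^ 3 - 2 * Cp ^ 2 * Cs := by
    rw [show Cp ^ 3 + 4 * Cs ^ 3 - 2 * Cp ^ 2 * Cs = (Cp + Cs) * (Cp - 2 * Cs) ^ 2 + Cp ^ 2 * Cs
      by ring]
    positivity
  have hinner : Cp ^ 2 * (Cp * ω ^ 2 + 2 * Cs ^ 3 * (k ^ 2 - a ^ 2)) =
      ω ^ 2 * (Cp ^ 3 + 4 * Cs ^ 3 - 2 * Cp ^ 2 * Cs) + 4 * Cs ^ 3 * Cp ^ 2 * b ^ 2 := by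
    linear_combination (-2 * Cs * Cp ^ 2) * hrelA + 4 * Cs ^ 3 * hrelB
  have : 0 < Cp * ω ^ 2 + 2 * Cs ^ 3 * (k ^ 2 - a ^ 2) := by
    refine pos_of_mul_pos_right (a := Cp ^ 2) ?_ (by positivity)
    rw [hinner]
    positivity
  unfold realK
  positivity

lemma realA_mul_realC_lt (hω : 0 < ω) (hCs : 0 < Cs) (hCp : 0 < Cp) (hk : 0 < k)
    (ha : 0 < a) (hb : 0 < b)
    (hrelA : Cs ^ 2 * (a ^ 2 + k ^ 2) = ω ^ 2) (hrelB : Cp ^ 2 * (k ^ 2 - b ^ 2) = ω ^ 2) :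
    realA ω a * realC ω Cs Cp b < realZ1 ω Cs Cp k a * realZ2 ω Cs Cp k a b := by
  have hK := realK_pos hω hCs hCp hk hrelA hrelB
  linarith [realK_sq_identity (b := b) (Cp := Cp) hCs.ne' hrelA,
    mul_pos (mul_pos ha hb) (pow_pos hK 2)]

variable (hl1 : lam1 ω Cs k = I * a) (hl2 : lam2 ω Cp k = b)
include hl1

lemma Z1_eq : Z1 ω Cs Cp k = realZ1 ω Cs Cp k a := by
  rw [Z1, hl1, realZ1, mul_pow, I_sq]; push_cast; ring

lemma Kq_eq : Kq ω Cs Cp k = realK ω Cs Cp k a := by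
  rw [Kq, hl1, realK, mul_pow, I_sq]; push_cast; ring

include hl2

lemma Z2_eq : Z2 ω Cs Cp k = realZ2 ω Cs Cp k a b * I := by
  rw [Z2, hl1, hl2, realZ2]; push_cast; ring

lemma Dq_eq : Dq ω Cs Cp k =
    -(realZ1 ω Cs Cp k a + realA ω a) + (realZ2 ω Cs Cp k a b + realC ω Cs Cp b) * I := by
  rw [Dq, Z1_eq hl1, Z2_eq hl1 hl2, hl1, hl2, realA, realC]
  push_cast
  linear_combination (ω : ℂ) ^ 3 * a * I_sq

variable (hD : Dq ω Cs Cp k ≠ 0)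
include hD

lemma b11_mul_Dq : b11 ω Cs Cp k * Dq ω Cs Cp k =
    (realA ω a - realZ1 ω Cs Cp k a) + (realC ω Cs Cp b - realZ2 ω Cs Cp k a b) * I := by
  rw [b11, div_mul_cancel₀ _ hD, Z1_eq hl1, Z2_eq hl1 hl2, hl1, hl2, realA, realC]
  push_cast
  linear_combination -(ω : ℂ) ^ 3 * a * I_sq

lemma b22_mul_Dq : b22 ω Cs Cp k * Dq ω Cs Cp k =
    -(realZ1 ω Cs Cp k a + realA ω a) - (realZ2 ω Cs Cp k a b + realC ω Cs Cp b) * I := by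
  rw [b22, div_mul_cancel₀ _ hD, Z1_eq hl1, Z2_eq hl1 hl2, hl1, hl2, realA, realC]
  push_cast
  linear_combination (ω : ℂ) ^ 3 * a * I_sq

lemma b12_mul_Dq : b12 ω Cs Cp k * Dq ω Cs Cp k = b * realK ω Cs Cp k a * I := by
  rw [b12, div_mul_cancel₀ _ hD, Kq_eq hl1, hl2]
  ring

omit hl2 in
lemma b21_mul_Dq : b21 ω Cs Cp k * Dq ω Cs Cp k = a * realK ω Cs Cp k a := by
  rw [b21, div_mul_cancel₀ _ hD, Kq_eq hl1, hl1]
  linear_combination -(a : ℂ) * realK ω Cs Cp k a * I_sq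

lemma Xd_zero_mul_Dq :
    Xd ω Cs Cp k 0 * Dq ω Cs Cp k = 2 * realA ω a + 2 * realC ω Cs Cp b * I := by
  rw [Xd, ofReal_zero, mul_zero, mul_zero, exp_zero, one_mul, one_mul, sub_mul,
    b11_mul_Dq hl1 hl2 hD, b22_mul_Dq hl1 hl2 hD]
  ring

lemma Yd_zero_mul_Dq (hCs : Cs ≠ 0) (hrel : Cs ^ 2 * (a ^ 2 + k ^ 2) = ω ^ 2) :
    Yd ω Cs Cp k 0 * Dq ω Cs Cp k =
      -(realZ1 ω Cs Cp k a - realA ω a) + (realZ2 ω Cs Cp k a b - realC ω Cs Cp b) * I := by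
  refine mul_right_cancel₀ hD ?_
  have hK := congrArg (fun x : ℝ => (x : ℂ)) (realK_sq_identity (b := b) (Cp := Cp) hCs hrel)
  push_cast at hK
  calc Yd ω Cs Cp k 0 * Dq ω Cs Cp k * Dq ω Cs Cp k
      = b11 ω Cs Cp k * Dq ω Cs Cp k * (b22 ω Cs Cp k * Dq ω Cs Cp k) -
          b12 ω Cs Cp k * Dq ω Cs Cp k * (b21 ω Cs Cp k * Dq ω Cs Cp k) := by
        rw [Yd, ofReal_zero, mul_zero, exp_zero, one_mul]; ring
    _ = _ := by
        rw [b11_mul_Dq hl1 hl2 hD, b22_mul_Dq hl1 hl2 hD, b12_mul_Dq hl1 hl2 hD,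
          b21_mul_Dq hl1 hD, Dq_eq hl1 hl2]
        linear_combination -I * hK

end RealData

theorem taylor_nonoverlapping_intermediate_contraction_general
    (ω Cs Cp k : ℝ)
    (hω : 0 < ω) (hCs : 0 < Cs) (hCsCp : Cs < Cp)
    (hk1 : ω / Cp < k) (hk2 : k < ω / Cs) :
    ∀ z : ℂ, Qd ω Cs Cp k 0 z = 0 → ‖z‖ < 1 := by
  have hCp : 0 < Cp := hCs.trans hCsCp
  have hk : 0 < k := (div_pos hω hCp).trans hk1
  obtain ⟨a, b, ha, hb, hrelA, hrelB, hl1, hl2⟩ :=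
    exists_lam_eq_of_intermediate hω hCs hCp hk1 hk2
  have hZ1 : 0 < realZ1 ω Cs Cp k a := by unfold realZ1; positivity
  have hZ2 : 0 < realZ2 ω Cs Cp k a b := by unfold realZ2; positivity
  have hA : 0 < realA ω a := by unfold realA; positivity
  have hC : 0 < realC ω Cs Cp b := by unfold realC; positivity
  have hD : Dq ω Cs Cp k ≠ 0 := by
    rw [Dq_eq hl1 hl2]
    intro h
    have : -(realZ1 ω Cs Cp k a + realA ω a) = 0 := by simpa using congrArg re h
    linarith
  intro z hz
  obtain ⟨s, rfl, hs⟩ := exists_sq_eq_of_quadratic_eq_zero hz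
  rw [norm_pow]
  refine pow_lt_one₀ (norm_nonneg s) (norm_lt_one_of_quadratic_eq_zero hA hC hZ1.le hZ2
    (realA_mul_realC_lt hω hCs hCp hk ha hb hrelA hrelB) ?_) two_ne_zero
  rw [← Dq_eq hl1 hl2, ← Xd_zero_mul_Dq hl1 hl2 hD, ← Yd_zero_mul_Dq hl1 hl2 hD hCs.ne' hrelA]
  linear_combination Dq ω Cs Cp k * hs

/-- **Theorem 3.3, middle case**: for `ω/Cp < k < ω/Cs`, both roots of
`Q₀(z) = z² − (X₀² + 2Y₀)z + Y₀²` have modulus strictly less than `1`; the non-overlapping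
Schwarz method with zeroth-order Taylor transmission conditions converges on these
frequencies. -/
theorem taylor_nonoverlapping_intermediate_contraction
    (ω Cs Cp k : ℝ)
    (hω : 0 < ω) (hCs : 0 < Cs) (hCsCp : Cs < Cp) (hCp2 : 2 * Cs ^ 2 < Cp ^ 2)
    (hk1 : ω / Cp < k) (hk2 : k < ω / Cs)
    (hD : Dq ω Cs Cp k ≠ 0) :
    ∀ z : ℂ, Qd ω Cs Cp k 0 z = 0 → ‖z‖ < 1 :=
  taylor_nonoverlapping_intermediate_contraction_general ω Cs Cp k hω hCs hCsCp hk1 hk2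

end
end

section
/- High-frequency stagnation of Taylor transmission conditions without overlap (Theorem 3.3, last case): for every Fourier frequency k > ω/Cs (so λ₁ = √(k² − ω²/Cs²) > 0 and λ₂ = √(k² − ω²/Cp²) > 0 are real), both roots of the quadratic Q₀(z) = z² − (X₀² + 2Y₀)z + Y₀² have modulus exactly equal to 1; hence the non-overlapping Schwarz method with zeroth-order Taylor transmission conditions stagnates on all frequencies k ≥ ω/Cs. -/
noncomputable section

open Complex

/-! For real `λ₁, λ₂` one has `D·X₀ = -2ic` with `c = ω³(λ₁ - λ₂Cp/Cs)` real and `D·Y₀ = D̄`.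
Multiplying `Q₀(z) = 0` by `D²` gives the self-inversive equation
`D²z² - 2(|D|² - 2c²)z + D̄² = 0`, and `c² ≤ |D|²` (since `λ₁λ₂ ≥ 0`). For `p z² - 2sz + p̄ = 0`
with `s` real, comparing the equation with its conjugate times `z²` gives
`(|z|² - 1)(p̄(|z|² + 1) - 2sz) = 0`, and `s² ≤ |p|²` rules out the second factor unless
`|z| = 1`. -/

open ComplexConjugate

theorem Complex.norm_eq_one_of_mul_sq_sub_mul_add_conj_eq_zero {p z : ℂ} {s : ℝ} (hp : p ≠ 0)
    (hs : s ^ 2 ≤ normSq p) (h : p * z ^ 2 - 2 * s * z + conj p = 0) : ‖z‖ = 1 := by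
  have hconj := congrArg conj h
  simp only [map_sub, map_add, map_mul, map_pow, map_ofNat, conj_ofReal, conj_conj,
    map_zero] at hconj
  set t := normSq z with ht_def
  have hzt : z * conj z = t := mul_conj z
  have hfactor : ((t : ℂ) - 1) * (conj p * (t + 1) - 2 * s * z) = 0 := by
    rw [← hzt]
    linear_combination z ^ 2 * hconj - h
  have ht : t = 1 := by
    rcases mul_eq_zero.mp hfactor with h1 | h2
    · exact_mod_cast sub_eq_zero.mp h1
    · have hnorm := congrArg normSq (sub_eq_zero.mp h2)
      have hp' : 0 < normSq p := normSq_pos.mpr hp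
      rw [normSq_mul, normSq_mul, normSq_mul, normSq_conj,
        show (t : ℂ) + 1 = ((t + 1 : ℝ) : ℂ) by push_cast; rfl, normSq_ofReal, normSq_ofNat,
        normSq_ofReal] at hnorm
      rw [← ht_def] at hnorm
      have hle : normSq p * (t - 1) ^ 2 ≤ normSq p * 0 := by
        nlinarith [mul_nonneg (normSq_nonneg z) (sub_nonneg.mpr hs)]
      nlinarith [le_of_mul_le_mul_left hle hp', sq_nonneg (t - 1)]
  rw [norm_def, ← ht_def, ht, Real.sqrt_one]

theorem Complex.norm_eq_one_of_sq_sub_mul_add_sq_eq_zero {E X Y z : ℂ} {c : ℝ} (hE : E ≠ 0)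
    (hX : X * E = -2 * I * c) (hY : Y * E = conj E) (hc : c ^ 2 ≤ normSq E)
    (hz : z ^ 2 - (X ^ 2 + 2 * Y) * z + Y ^ 2 = 0) : ‖z‖ = 1 := by
  refine norm_eq_one_of_mul_sq_sub_mul_add_conj_eq_zero (pow_ne_zero 2 hE)
    (s := normSq E - 2 * c ^ 2) ?_ ?_
  · rw [map_pow]
    nlinarith [sq_nonneg c]
  · rw [map_pow, ← hY]
    push_cast
    rw [← mul_conj, ← hY]
    linear_combination E ^ 2 * hz + z * (X * E - 2 * I * c) * hX + 4 * z * c ^ 2 * I_sq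

theorem Complex.ofReal_cpow_one_half {x : ℝ} (hx : 0 ≤ x) :
    (x : ℂ) ^ ((1 : ℂ) / 2) = (√x : ℝ) := by
  rw [Real.sqrt_eq_rpow, ofReal_cpow hx]
  norm_num

theorem sub_sq_div_sq_nonneg {ω C k : ℝ} (hω : 0 ≤ ω) (hC : 0 < C) (hk : ω / C ≤ k) :
    0 ≤ k ^ 2 - ω ^ 2 / C ^ 2 := by
  rw [← div_pow, sub_nonneg]
  exact pow_le_pow_left₀ (div_nonneg hω hC.le) hk 2

section

variable {ω Cs Cp k : ℝ}

theorem lam1_sq : lam1 ω Cs k ^ 2 = ((k ^ 2 - ω ^ 2 / Cs ^ 2 : ℝ) : ℂ) := by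
  rw [lam1, one_div]
  exact_mod_cast cpow_nat_inv_pow _ two_ne_zero

theorem Xd_zero_mul_Dq_s13 (hD : Dq ω Cs Cp k ≠ 0) :
    Xd ω Cs Cp k 0 * Dq ω Cs Cp k =
      -2 * I * ω ^ 3 * (lam1 ω Cs k - lam2 ω Cp k * Cp / Cs) := by
  simp only [Xd, b11, b22, ofReal_zero, mul_zero, exp_zero, one_mul]
  field_simp
  ring

theorem Yd_zero_mul_Dq_s13 (hCs : Cs ≠ 0) (hD : Dq ω Cs Cp k ≠ 0) :
    Yd ω Cs Cp k 0 * Dq ω Cs Cp k =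
      -Z1 ω Cs Cp k + Z2 ω Cs Cp k - I * ω ^ 3 * (lam1 ω Cs k + lam2 ω Cp k * Cp / Cs) := by
  -- the right side is the formal conjugate of `D`; only `λ₁² = k² - ω²/Cs²` enters
  apply mul_right_cancel₀ hD
  calc Yd ω Cs Cp k 0 * Dq ω Cs Cp k * Dq ω Cs Cp k
      = b11 ω Cs Cp k * Dq ω Cs Cp k * (b22 ω Cs Cp k * Dq ω Cs Cp k) -
          b12 ω Cs Cp k * Dq ω Cs Cp k * (b21 ω Cs Cp k * Dq ω Cs Cp k) := by
        simp only [Yd, ofReal_zero, mul_zero, exp_zero, one_mul]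
        ring
    _ = _ := by
      have hCs' : (Cs : ℂ) ≠ 0 := ofReal_ne_zero.mpr hCs
      have hlam1 := lam1_sq (ω := ω) (Cs := Cs) (k := k)
      push_cast at hlam1
      simp only [b11, b22, b12, b21, div_mul_cancel₀ _ hD]
      rw [Dq, Z1, Z2, Kq]
      -- the defect is `4λ₁λ₂Cs³Cpω²((λ₁² - k²)² - ω⁴/Cs⁴)`
      linear_combination (norm := skip) 4 * lam1 ω Cs k * lam2 ω Cp k * Cs ^ 3 * Cp * ω ^ 2 *
        (lam1 ω Cs k ^ 2 - k ^ 2 - ω ^ 2 / Cs ^ 2) * hlam1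
      field_simp
      ring_nf
      rw [I_sq]
      ring

end

section

variable {ω Cs Cp k l1 l2 : ℝ}

theorem Dq_eq_of_lam_eq_ofReal (hl1 : lam1 ω Cs k = l1) (hl2 : lam2 ω Cp k = l2) :
    Dq ω Cs Cp k = ((-(Cs ^ 3 * (k ^ 2 + l1 ^ 2) ^ 2 + ω ^ 2 * Cp * k ^ 2) +
      (4 * Cs ^ 3 * k ^ 2 + Cp * ω ^ 2) * l1 * l2 : ℝ) : ℂ) +
        ((ω ^ 3 * (l1 + l2 * Cp / Cs) : ℝ) : ℂ) * I := by
  rw [Dq, Z1, Z2, hl1, hl2]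
  push_cast
  ring

theorem conj_Dq_of_lam_eq_ofReal (hl1 : lam1 ω Cs k = l1) (hl2 : lam2 ω Cp k = l2) :
    conj (Dq ω Cs Cp k) =
      -Z1 ω Cs Cp k + Z2 ω Cs Cp k - I * ω ^ 3 * (lam1 ω Cs k + lam2 ω Cp k * Cp / Cs) := by
  rw [Dq_eq_of_lam_eq_ofReal hl1 hl2, Z1, Z2, hl1, hl2]
  simp only [map_add, map_mul, conj_ofReal, conj_I]
  push_cast
  ring

theorem sq_le_normSq_Dq (hl1 : lam1 ω Cs k = l1) (hl2 : lam2 ω Cp k = l2) (hl1_nonneg : 0 ≤ l1)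
    (hl2_nonneg : 0 ≤ l2) (hCs : 0 < Cs) (hCp : 0 < Cp) :
    (ω ^ 3 * (l1 - l2 * Cp / Cs)) ^ 2 ≤ normSq (Dq ω Cs Cp k) := by
  rw [Dq_eq_of_lam_eq_ofReal hl1 hl2, normSq_add_mul_I]
  have : 0 ≤ (ω ^ 3) ^ 2 * l1 * (l2 * Cp / Cs) := by positivity
  nlinarith [sq_nonneg (-(Cs ^ 3 * (k ^ 2 + l1 ^ 2) ^ 2 + ω ^ 2 * Cp * k ^ 2) +
      (4 * Cs ^ 3 * k ^ 2 + Cp * ω ^ 2) * l1 * l2)]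

end

theorem taylor_nonoverlapping_high_frequency_stagnation_general
    (ω Cs Cp k : ℝ)
    (hω : 0 < ω) (hCs : 0 < Cs) (hCsCp : Cs < Cp)
    (hk : ω / Cs < k)
    (hD : Dq ω Cs Cp k ≠ 0) :
    ∀ z : ℂ, Qd ω Cs Cp k 0 z = 0 → ‖z‖ = 1 := by
  intro z hz
  have hCp : 0 < Cp := hCs.trans hCsCp
  have hr1 := sub_sq_div_sq_nonneg hω.le hCs hk.le
  have hr2 := sub_sq_div_sq_nonneg hω.le hCp
    ((div_le_div_of_nonneg_left hω.le hCs hCsCp.le).trans hk.le)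
  have hl1 : lam1 ω Cs k = (√(k ^ 2 - ω ^ 2 / Cs ^ 2) : ℝ) := ofReal_cpow_one_half hr1
  have hl2 : lam2 ω Cp k = (√(k ^ 2 - ω ^ 2 / Cp ^ 2) : ℝ) := ofReal_cpow_one_half hr2
  refine norm_eq_one_of_sq_sub_mul_add_sq_eq_zero hD ?_ ?_
    (sq_le_normSq_Dq hl1 hl2 (Real.sqrt_nonneg _) (Real.sqrt_nonneg _) hCs hCp) hz
  · rw [Xd_zero_mul_Dq_s13 hD, hl1, hl2]
    push_cast
    ring
  · rw [Yd_zero_mul_Dq_s13 hCs.ne' hD, conj_Dq_of_lam_eq_ofReal hl1 hl2]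

/-- **Theorem 3.3, last case**: for every `k > ω/Cs`, both roots of
`Q₀(z) = z² − (X₀² + 2Y₀)z + Y₀²` have modulus exactly `1`; the non-overlapping Schwarz
method with zeroth-order Taylor transmission conditions stagnates on these frequencies. -/
theorem taylor_nonoverlapping_high_frequency_stagnation
    (ω Cs Cp k : ℝ)
    (hω : 0 < ω) (hCs : 0 < Cs) (hCsCp : Cs < Cp) (hCp2 : 2 * Cs ^ 2 < Cp ^ 2)
    (hk : ω / Cs < k)
    (hD : Dq ω Cs Cp k ≠ 0) :
    ∀ z : ℂ, Qd ω Cs Cp k 0 z = 0 → ‖z‖ = 1 :=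
  taylor_nonoverlapping_high_frequency_stagnation_general ω Cs Cp k hω hCs hCsCp hk hD

end
end
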